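/- Derivative identity for products of difference quotients (eq. (dv of PiQ)): Let f : ℝ → ℝ^l be differentiable, let n₁, …, n_l ≥ 1 be integers with n = n₁ + ⋯ + n_l, and for x ≠ y write ΠQ[f]^{n₁,…,n_l}(x,y) = ∏_{k=1}^l ((f_k(x) − f_k(y))/(x−y))^{n_k}. Then for all y ≠ z: (1/(y−z))·ΠQ[f]^{n₁,…,n_l}(y,z) = Σ_{k=1}^{l} (n_k/n)·(f_k'(y)/(y−z))·ΠQ[f]^{n₁,…,n_k−1,…,n_l}(y,z) − (1/n)·∂_y[ΠQ[f]^{n₁,…,n_l}](y,z), where ∂_y denotes the partial derivative in the first argument. -/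

import Mathlib

open MeasureTheory Filter Set
open scoped Classical

noncomputable section

/-- A modulus of continuity: bounded, continuous, nondecreasing on `[0,∞)`,
vanishing at `0` and positive for positive arguments. -/
def IsModulus (φ : ℝ → ℝ) : Prop :=
  (∀ r, 0 ≤ φ r) ∧ BddAbove (Set.range φ) ∧ ContinuousOn φ (Set.Ici 0) ∧
    MonotoneOn φ (Set.Ici 0) ∧ φ 0 = 0 ∧ ∀ r : ℝ, 0 < r → 0 < φ r

/-- The induced modulus `φ̃(r) = ∫₀^r φ(s)/s ds`. -/
def inducedMod (φ : ℝ → ℝ) (r : ℝ) : ℝ := ∫ s in Set.Ioc (0:ℝ) r, φ s / s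

/-- Assumption (A1), with explicit exponent `θ ∈ (0,1/2)`. -/
def A1 (φ : ℝ → ℝ) (θ : ℝ) : Prop :=
  θ ∈ Set.Ioo (0:ℝ) (1/2) ∧
    (∀ r : ℝ, 0 < r → IntegrableOn (fun s => φ s ^ θ / s) (Set.Ioc 0 r)) ∧
    Tendsto (fun r => ∫ s in Set.Ioc (0:ℝ) r, φ s ^ θ / s)
      (nhdsWithin 0 (Set.Ioi 0)) (nhds 0)

/-- Assumption (A2): a scaling property of `φ`. -/
def A2 (φ : ℝ → ℝ) : Prop :=
  ∃ C₀ > (0:ℝ), ∃ C₁ > (0:ℝ), ∀ δ ∈ Set.Ioo (0:ℝ) 1, ∀ r : ℝ, 0 < r → r < C₀ * δ →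
    φ (r / δ) * φ δ ≤ C₁ * φ r

/-- Assumption (A3): `φ(r)(−log r) → 0` and `φ(r)(−log r) ∈ C^{φ̃}` near `0`. -/
def A3 (φ : ℝ → ℝ) : Prop :=
  Tendsto (fun r => φ r * (-Real.log r)) (nhdsWithin 0 (Set.Ioi 0)) (nhds 0) ∧
    ∃ C₂ > (0:ℝ), ∀ r ∈ Set.Ioc (0:ℝ) (1/2), ∀ s ∈ Set.Ioc (0:ℝ) (1/2),
      |φ r * (-Real.log r) - φ s * (-Real.log s)| ≤ C₂ * inducedMod φ |r - s|

section Norms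

variable {X E : Type*} [PseudoMetricSpace X] [SeminormedAddCommGroup E]

/-- The `C⁰` (sup) norm. -/
def supN (f : X → E) : ℝ := sSup (Set.range fun x => ‖f x‖)

/-- `f` is bounded. -/
def BddSupN (f : X → E) : Prop := BddAbove (Set.range fun x => ‖f x‖)

/-- The set of Hölder-type quotients of `f` w.r.t. the modulus `φ`. -/
def holSet (φ : ℝ → ℝ) (f : X → E) : Set ℝ :=
  {r | ∃ x y : X, x ≠ y ∧ r = ‖f x - f y‖ / φ (dist x y)}

/-- The seminorm `‖f‖_{Ċ^φ}`. -/
def holSemi (φ : ℝ → ℝ) (f : X → E) : ℝ := sSup (holSet φ f)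

/-- Finiteness of the seminorm `‖f‖_{Ċ^φ}`. -/
def BddHol (φ : ℝ → ℝ) (f : X → E) : Prop := BddAbove (holSet φ f)

/-- The norm `‖f‖_{C^φ} = ‖f‖_{C⁰} + ‖f‖_{Ċ^φ}`. -/
def cphiN (φ : ℝ → ℝ) (f : X → E) : ℝ := supN f + holSemi φ f

/-- `f ∈ C^φ`. -/
def MemCphi (φ : ℝ → ℝ) (f : X → E) : Prop := BddSupN f ∧ BddHol φ f

end Norms

section DerivNorms

variable {E : Type*} [NormedAddCommGroup E] [NormedSpace ℝ E]

/-- The `C¹` norm `‖f‖_{C⁰} + ‖f'‖_{C⁰}`. -/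
def c1N (f : ℝ → E) : ℝ := supN f + supN (deriv f)

/-- The norm `‖f‖_{C^{1,φ}} = ‖f‖_{C⁰} + ‖f'‖_{C^φ}`. -/
def c1phiN (φ : ℝ → ℝ) (f : ℝ → E) : ℝ := supN f + cphiN φ (deriv f)

/-- `f ∈ C^{1,φ}(ℝ)`. -/
def MemC1phi (φ : ℝ → ℝ) (f : ℝ → E) : Prop :=
  ContDiff ℝ 1 f ∧ BddSupN f ∧ MemCphi φ (deriv f)

end DerivNorms

/-- `L` is the principal value `(1/π) P.V.∫ f(y)/(x−y) dy` (Hilbert transform of `f` at `x`). -/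
def HasHT (f : ℝ → ℝ) (x L : ℝ) : Prop :=
  Tendsto (fun ε : ℝ => (Real.pi)⁻¹ * ∫ y in {y : ℝ | ε < |x - y|}, f y / (x - y))
    (nhdsWithin 0 (Set.Ioi 0)) (nhds L)

/-- The Hilbert transform of `f`, defined as the principal value when it exists. -/
def HT (f : ℝ → ℝ) (x : ℝ) : ℝ := if h : ∃ L, HasHT f x L then h.choose else 0

-- ===================== torus side =====================

/-- The plane `ℝ²`. -/
abbrev E2 := EuclideanSpace ℝ (Fin 2)

/-- The intrinsic distance on the torus `ℝ/2πℤ`. -/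
def tdist (x y : ℝ) : ℝ := ⨅ n : ℤ, |x - y - 2 * Real.pi * (n : ℝ)|

/-- `x` and `y` represent distinct points of the torus `ℝ/2πℤ`. -/
def TNe (x y : ℝ) : Prop := ∀ n : ℤ, x - y ≠ 2 * Real.pi * (n : ℝ)

/-- Hölder quotients on the torus. -/
def tholSet (φ : ℝ → ℝ) (f : ℝ → E2) : Set ℝ :=
  {r | ∃ x y : ℝ, TNe x y ∧ r = ‖f x - f y‖ / φ (tdist x y)}

def tholSemi (φ : ℝ → ℝ) (f : ℝ → E2) : ℝ := sSup (tholSet φ f)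

def TBddHol (φ : ℝ → ℝ) (f : ℝ → E2) : Prop := BddAbove (tholSet φ f)

def tcphiN (φ : ℝ → ℝ) (f : ℝ → E2) : ℝ := supN f + tholSemi φ f

/-- `‖f‖_{C^{1,φ}(𝕋)} = ‖f‖_{C⁰} + ‖f'‖_{C^φ}` on the torus. -/
def tc1phiN (φ : ℝ → ℝ) (f : ℝ → E2) : ℝ := supN f + tcphiN φ (deriv f)

/-- `f ∈ C^{1,φ}(𝕋;ℝ²)`: a `2π`-periodic continuously differentiable map with finite norm. -/
def TMemC1phi (φ : ℝ → ℝ) (f : ℝ → E2) : Prop :=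
  Function.Periodic f (2 * Real.pi) ∧ ContDiff ℝ 1 f ∧ BddSupN f ∧
    BddSupN (deriv f) ∧ TBddHol φ (deriv f)

/-- `L` is the principal value of the periodic Hilbert transform
`(1/2π) P.V.∫_𝕋 f(η) cot((x−η)/2) dη` at `x`. -/
def HasTHT (f : ℝ → E2) (x : ℝ) (L : E2) : Prop :=
  Tendsto (fun ε : ℝ => (2 * Real.pi)⁻¹ •
      ∫ η in Set.Ioc (x - Real.pi) (x + Real.pi) ∩ {η : ℝ | ε < |x - η|},
        Real.cot ((x - η) / 2) • f η)
    (nhdsWithin 0 (Set.Ioi 0)) (nhds L)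

/-- The periodic Hilbert transform, defined as the principal value when it exists. -/
def THT (f : ℝ → E2) (x : ℝ) : E2 := if h : ∃ L, HasTHT f x L then h.choose else 0

/-- The contour dynamics velocity `v[γ](ξ) = ∫_𝕋 log|γ(ξ)−γ(η)| ∂γ(η) dη`. -/
def velocity (γ : ℝ → E2) (ξ : ℝ) : E2 :=
  ∫ η in Set.Ioc (-Real.pi) Real.pi, Real.log ‖γ ξ - γ η‖ • deriv γ η

/-- The arc-chord constant `|γ|_⋆ = inf_{ξ≠η} |γ(ξ)−γ(η)|/dist(ξ,η)`. -/
def arcChord (γ : ℝ → E2) : ℝ :=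
  sInf {r | ∃ x y : ℝ, TNe x y ∧ r = ‖γ x - γ y‖ / tdist x y}

/-- `(γ, h) ∈ O^M`: both in `C^{1,φ}(𝕋;ℝ²)`, `h = H[γ]`, with norms `< M`
and arc-chord constant `> 1/M`. -/
def memOM (φ : ℝ → ℝ) (M : ℝ) (γ h : ℝ → E2) : Prop :=
  TMemC1phi φ γ ∧ TMemC1phi φ h ∧ (∀ x, HasTHT γ x (h x)) ∧
    tc1phiN φ γ < M ∧ tc1phiN φ h < M ∧ 1 / M < arcChord γ

/-- Difference quotient `Q[g](x,y) = (g(x)−g(y))/(x−y)`. -/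
def Qd (g : ℝ → ℝ) (x y : ℝ) : ℝ := (g x - g y) / (x - y)

/-- Product of powers of difference quotients `ΠQ[f]^{n₁,…,n_l}(x,y)`. -/
def PiQ {l : ℕ} (f : Fin l → ℝ → ℝ) (n : Fin l → ℕ) (x y : ℝ) : ℝ :=
  ∏ k, Qd (f k) x y ^ n k

/-- `L` is the principal value defining `𝒯₀^{n}[f](x)`. -/
def HasT0 {l : ℕ} (f : Fin l → ℝ → ℝ) (n : Fin l → ℕ) (x L : ℝ) : Prop :=
  Tendsto (fun ε : ℝ => ∫ y in {y : ℝ | ε < |x - y|}, PiQ f n x y / (x - y))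
    (nhdsWithin 0 (Set.Ioi 0)) (nhds L)

/-- `𝒯₀^{n}[f]`, defined as the principal value when it exists. -/
def T0 {l : ℕ} (f : Fin l → ℝ → ℝ) (n : Fin l → ℕ) (x : ℝ) : ℝ :=
  if h : ∃ L, HasT0 f n x L then h.choose else 0

/-- `L` is the principal value defining `𝒯_j^{n}[f](x)` for `j ∈ {1,…,l}`. -/
def HasTj {l : ℕ} (f : Fin l → ℝ → ℝ) (n : Fin l → ℕ) (j : Fin l) (x L : ℝ) : Prop :=
  Tendsto (fun ε : ℝ => ∫ y in {y : ℝ | ε < |x - y|}, deriv (f j) y * PiQ f n x y / (x - y))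
    (nhdsWithin 0 (Set.Ioi 0)) (nhds L)

/-- `𝒯_j^{n}[f]`, defined as the principal value when it exists. -/
def Tj {l : ℕ} (f : Fin l → ℝ → ℝ) (n : Fin l → ℕ) (j : Fin l) (x : ℝ) : ℝ :=
  if h : ∃ L, HasTj f n j x L then h.choose else 0

/-! With `Q_k(w) = Q[f_k](w, z)` one has `∂_w Q_k = (f_k' − Q_k) / (w − z)`. By the product rule,
`∂_y ΠQ^n = Σ_k n_k ∂_y Q_k · ΠQ^{n − e_k}`, and since `Q_k · ΠQ^{n − e_k} = ΠQ^n` when `n_k ≥ 1`,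
this equals `(Σ_k n_k f_k'(y) ΠQ^{n − e_k} − (Σ_k n_k) ΠQ^n) / (y − z)`; solving for `ΠQ^n / (y − z)`
gives the identity. -/

open Finset Function

section ProdPow

variable {ι M : Type*} [Fintype ι] [DecidableEq ι] [CommMonoid M]

theorem prod_pow_update_eq_pow_mul_prod_erase (g : ι → M) (n : ι → ℕ) (k : ι) (m : ℕ) :
    ∏ j, g j ^ update n k m j = g k ^ m * ∏ j ∈ univ.erase k, g j ^ n j := by
  rw [← mul_prod_erase _ _ (mem_univ k), update_self]
  congr 1
  exact prod_congr rfl fun j hj => by rw [update_of_ne (ne_of_mem_erase hj)]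

theorem mul_prod_pow_update_pred (g : ι → M) {n : ι → ℕ} {k : ι} (hk : n k ≠ 0) :
    g k * ∏ j, g j ^ update n k (n k - 1) j = ∏ j, g j ^ n j := by
  rw [prod_pow_update_eq_pow_mul_prod_erase, ← mul_assoc, ← pow_succ',
    Nat.sub_add_cancel (Nat.one_le_iff_ne_zero.mpr hk)]
  exact mul_prod_erase univ (fun j => g j ^ n j) (mem_univ k)

end ProdPow

theorem HasDerivAt.fun_prod_pow {𝕜 ι : Type*} [NontriviallyNormedField 𝕜] [Fintype ι]
    [DecidableEq ι] {g : ι → 𝕜 → 𝕜} {g' : ι → 𝕜} {x : 𝕜} (n : ι → ℕ)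
    (hg : ∀ k, HasDerivAt (g k) (g' k) x) :
    HasDerivAt (fun w => ∏ k, g k w ^ n k)
      (∑ k, n k * g' k * ∏ j, g j x ^ update n k (n k - 1) j) x := by
  refine (HasDerivAt.fun_finsetProd (u := univ) fun k _ => (hg k).fun_pow (n k)).congr_deriv
    (sum_congr rfl fun k _ => ?_)
  rw [prod_pow_update_eq_pow_mul_prod_erase, smul_eq_mul]
  ring

theorem hasDerivAt_Qd {g : ℝ → ℝ} {g' y z : ℝ} (hg : HasDerivAt g g' y) (hyz : y ≠ z) :
    HasDerivAt (fun w => Qd g w z) ((g' - Qd g y z) / (y - z)) y := by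
  have hyz' : y - z ≠ 0 := sub_ne_zero.mpr hyz
  refine ((hg.sub_const (g z)).div ((hasDerivAt_id' y).sub_const z) hyz').congr_deriv ?_
  rw [Qd]
  field_simp

theorem hasDerivAt_PiQ {l : ℕ} {f : Fin l → ℝ → ℝ} {f' : Fin l → ℝ} {n : Fin l → ℕ} {y z : ℝ}
    (hf : ∀ k, HasDerivAt (f k) (f' k) y) (hn : ∀ k, n k ≠ 0) (hyz : y ≠ z) :
    HasDerivAt (fun w => PiQ f n w z)
      ((∑ k, n k * f' k * PiQ f (update n k (n k - 1)) y z - (∑ k, (n k : ℝ)) * PiQ f n y z)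
        / (y - z)) y := by
  refine (HasDerivAt.fun_prod_pow n fun k => hasDerivAt_Qd (hf k) hyz).congr_deriv ?_
  rw [sum_mul, ← sum_sub_distrib, sum_div]
  refine sum_congr rfl fun k _ => ?_
  have hQP : Qd (f k) y z * PiQ f (update n k (n k - 1)) y z = PiQ f n y z :=
    mul_prod_pow_update_pred (fun j => Qd (f j) y z) (hn k)
  rw [← hQP]
  simp only [PiQ]
  ring

/-- **Derivative identity for products of difference quotients** (eq. (dv of PiQ)). -/
theorem deriv_PiQ_identity {l : ℕ} (hl : 0 < l)
    (f : Fin l → ℝ → ℝ) (hf : ∀ k, Differentiable ℝ (f k))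
    (n : Fin l → ℕ) (hn : ∀ k, 1 ≤ n k)
    (y z : ℝ) (hyz : y ≠ z) :
    (1 / (y - z)) * PiQ f n y z =
      (∑ k : Fin l, ((n k : ℝ) / (∑ i, (n i : ℝ))) * (deriv (f k) y / (y - z)) *
        PiQ f (Function.update n k (n k - 1)) y z)
      - (1 / (∑ i, (n i : ℝ))) * deriv (fun w => PiQ f n w z) y := by
  have hN : (∑ i, (n i : ℝ)) ≠ 0 := by
    refine (sum_pos (fun i _ => ?_) ⟨⟨0, hl⟩, mem_univ _⟩).ne'
    exact_mod_cast hn i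
  have hyz' : y - z ≠ 0 := sub_ne_zero.mpr hyz
  have hn₀ : ∀ k, n k ≠ 0 := fun k => Nat.one_le_iff_ne_zero.mp (hn k)
  rw [(hasDerivAt_PiQ (fun k => (hf k y).hasDerivAt) hn₀ hyz).deriv]
  simp only [div_mul_eq_mul_div, mul_div_assoc', ← sum_div]
  field_simp
  ring
end
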